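/- Let Q_f be the GSR distribution on S_n and let Q_g be the distribution defined by Q_g(id) = (n+2)/(2^n + 1), Q_g(π) = 1/(2^n + 1) for rs(π) = 2, and 0 otherwise. Then the total variation distance satisfies TV(Q_f, Q_g) = (2^n − n − 1)/((2^n + 1)·2^n). Consequently, for any function R : S_n → ℝ with 0 ≤ R(π) ≤ n, |Σ_π R(π)Q_f(π) − Σ_π R(π)Q_g(π)| ≤ n/2^{n-1}. -/

import Mathlib

/-- Number of rising sequences of a permutation of `Fin n` (0-indexed values:
value `i` stands for card `i+1`, and `π j` is the card at position `j`). -/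
def risingSequences {n : ℕ} (π : Equiv.Perm (Fin n)) : ℕ :=
  1 + (Finset.univ.filter (fun i : Fin n =>
      ∃ j : Fin n, (j : ℕ) = (i : ℕ) + 1 ∧ π.symm j < π.symm i)).card

namespace TVaux

open Finset

variable {n : ℕ}

lemma card_filter_lt (n : ℕ) {m : ℕ} (h : m ≤ n) :
    ((univ : Finset (Fin n)).filter (fun x : Fin n => (x : ℕ) < m)).card = m := by
  have h2 : ((univ : Finset (Fin n)).filter (fun x : Fin n => (x : ℕ) < m)).card
      = (Finset.range m).card :=
    Finset.card_bij' (fun x _ => (x : ℕ))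
    (fun k hk => ⟨k, lt_of_lt_of_le (Finset.mem_range.1 hk) h⟩)
    (fun a ha => Finset.mem_range.2 (Finset.mem_filter.1 ha).2)
    (fun b hb => Finset.mem_filter.2 ⟨Finset.mem_univ _, Finset.mem_range.1 hb⟩)
    (fun a ha => rfl) (fun b hb => rfl)
  rw [h2, Finset.card_range]

lemma vC (V : Finset (Fin n)) : V.card + Vᶜ.card = n := by
  simpa using V.card_add_card_compl

def sigFun (V : Finset (Fin n)) (i : Fin n) : Fin n :=
  if h : (i : ℕ) < V.card then V.orderEmbOfFin rfl ⟨i, h⟩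
  else (Vᶜ).orderEmbOfFin rfl ⟨(i : ℕ) - V.card, by
    have h1 := vC V; have h2 := i.isLt; omega⟩

lemma sigFun_mem_iff (V : Finset (Fin n)) (i : Fin n) :
    sigFun V i ∈ V ↔ (i : ℕ) < V.card := by
  unfold sigFun
  by_cases h : (i : ℕ) < V.card
  · simp [h, Finset.orderEmbOfFin_mem]
  · simp only [h, dif_neg, not_false_iff, iff_false]
    have := (Vᶜ).orderEmbOfFin_mem rfl ⟨(i : ℕ) - V.card, by
      have h1 := vC V; have h2 := i.isLt; omega⟩
    rw [Finset.mem_compl] at this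
    simpa [h] using this

lemma sigFun_injective (V : Finset (Fin n)) : Function.Injective (sigFun V) := by
  intro i j hij
  by_cases hi : (i : ℕ) < V.card <;> by_cases hj : (j : ℕ) < V.card
  · rw [sigFun, dif_pos hi, sigFun, dif_pos hj] at hij
    have := Finset.orderEmbOfFin_eq_orderEmbOfFin_iff.1 hij
    exact Fin.ext this
  · exfalso
    have h1 : sigFun V i ∈ V := (sigFun_mem_iff V i).2 hi
    rw [hij, sigFun_mem_iff] at h1
    exact hj h1
  · exfalso
    have h1 : sigFun V j ∈ V := (sigFun_mem_iff V j).2 hj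
    rw [← hij, sigFun_mem_iff] at h1
    exact hi h1
  · rw [sigFun, dif_neg hi, sigFun, dif_neg hj] at hij
    have := Finset.orderEmbOfFin_eq_orderEmbOfFin_iff.1 hij
    simp only at this
    have h1 := i.isLt
    exact Fin.ext (by omega)

noncomputable def sig (V : Finset (Fin n)) : Equiv.Perm (Fin n) :=
  Equiv.ofBijective (sigFun V) (Finite.injective_iff_bijective.1 (sigFun_injective V))

lemma sig_apply (V : Finset (Fin n)) (i : Fin n) : sig V i = sigFun V i := rfl

lemma sig_mem_iff (V : Finset (Fin n)) (i : Fin n) :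
    sig V i ∈ V ↔ (i : ℕ) < V.card := sigFun_mem_iff V i

lemma mem_iff_symm (V : Finset (Fin n)) (x : Fin n) :
    x ∈ V ↔ ((sig V).symm x : ℕ) < V.card := by
  conv_lhs => rw [← Equiv.apply_symm_apply (sig V) x]
  exact sig_mem_iff V _

lemma sig_lt_low (V : Finset (Fin n)) {i j : Fin n} (hj : (j : ℕ) < V.card)
    (hij : i < j) : sig V i < sig V j := by
  have hi : (i : ℕ) < V.card := lt_trans hij hj
  rw [sig_apply, sig_apply, sigFun, dif_pos hi, sigFun, dif_pos hj]
  exact (V.orderEmbOfFin rfl).strictMono (by exact hij)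

lemma sig_lt_high (V : Finset (Fin n)) {i j : Fin n} (hi : V.card ≤ (i : ℕ))
    (hij : i < j) : sig V i < sig V j := by
  have hj : V.card ≤ (j : ℕ) := le_trans hi (le_of_lt hij)
  rw [sig_apply, sig_apply, sigFun, dif_neg (not_lt.2 hi), sigFun, dif_neg (not_lt.2 hj)]
  refine ((Vᶜ).orderEmbOfFin rfl).strictMono ?_
  have : (i : ℕ) < (j : ℕ) := hij
  exact Fin.mk_lt_mk.2 (by omega)

def IsInit (V : Finset (Fin n)) : Prop := ∀ x y : Fin n, x ≤ y → y ∈ V → x ∈ V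

instance : DecidablePred (IsInit (n := n)) := fun V =>
  decidable_of_iff (∀ x y : Fin n, x ≤ y → y ∈ V → x ∈ V) Iff.rfl

lemma cross_of_init {V : Finset (Fin n)} (h : IsInit V) {a b : Fin n}
    (ha : a ∈ V) (hb : b ∉ V) : a < b := by
  by_contra hc
  exact hb (h b a (not_lt.1 hc) ha)

lemma sig_eq_one_of_init {V : Finset (Fin n)} (h : IsInit V) : sig V = 1 := by
  have hmono : StrictMono (sig V) := by
    intro i j hij
    by_cases hj : (j : ℕ) < V.card
    · exact sig_lt_low V hj hij
    · by_cases hi : (i : ℕ) < V.card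
      · exact cross_of_init h ((sig_mem_iff V i).2 hi)
          (fun hc => hj ((sig_mem_iff V j).1 hc))
      · exact sig_lt_high V (not_lt.1 hi) hij
  have h1 : (fun k : Fin n => sig V k) = (univ : Finset (Fin n)).orderEmbOfFin (by simp) :=
    Finset.orderEmbOfFin_unique _ (fun x => Finset.mem_univ _) hmono
  have h2 : (fun k : Fin n => k) = (univ : Finset (Fin n)).orderEmbOfFin (by simp) :=
    Finset.orderEmbOfFin_unique _ (fun x => Finset.mem_univ _) strictMono_id
  exact Equiv.ext fun i => (congrFun h1 i).trans (congrFun h2 i).symm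

lemma init_of_sig_eq_one {V : Finset (Fin n)} (h : sig V = 1) : IsInit V := by
  have hm : ∀ x : Fin n, x ∈ V ↔ (x : ℕ) < V.card := by
    intro x
    have := sig_mem_iff V x
    rw [h] at this
    simpa using this
  intro x y hxy hy
  rw [hm] at hy ⊢
  exact lt_of_le_of_lt (by exact_mod_cast hxy) hy

/-- The "descent set" of a permutation. -/
def Dset (σ : Equiv.Perm (Fin n)) : Finset (Fin n) :=
  univ.filter (fun i => ∃ j : Fin n, (j : ℕ) = (i : ℕ) + 1 ∧ σ j < σ i)

lemma risingSequences_eq (π : Equiv.Perm (Fin n)) :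
    risingSequences π = 1 + (Dset π.symm).card := rfl

lemma Dset_sig {V : Finset (Fin n)} (h : ¬ IsInit V) :
    ∃ hlt : V.card - 1 < n, Dset (sig V) = {⟨V.card - 1, hlt⟩} := by
  have h' : ∃ x y : Fin n, x ≤ y ∧ y ∈ V ∧ x ∉ V := by
    by_contra hc
    push_neg at hc
    exact h fun x y hxy hy => hc x y hxy hy
  obtain ⟨a, b, hab, hb, ha⟩ := h'
  have hab' : a < b := lt_of_le_of_ne hab (fun hc => ha (hc ▸ hb))
  have hVne : V.Nonempty := ⟨b, hb⟩
  have hCne : (Vᶜ).Nonempty := ⟨a, Finset.mem_compl.2 ha⟩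
  have hv1 : 1 ≤ V.card := Finset.card_pos.2 hVne
  have hc1 : 1 ≤ (Vᶜ).card := Finset.card_pos.2 hCne
  have hvc := vC V
  have hvn : V.card < n := by omega
  have hlt : V.card - 1 < n := by omega
  refine ⟨hlt, ?_⟩
  have hminmax : (Vᶜ).min' hCne < V.max' hVne :=
    lt_of_le_of_lt (Finset.min'_le _ a (Finset.mem_compl.2 ha))
      (lt_of_lt_of_le hab' (Finset.le_max' _ b hb))
  ext i
  simp only [Dset, Finset.mem_filter, Finset.mem_univ, true_and, Finset.mem_singleton]
  constructor
  · rintro ⟨j, hj1, hj2⟩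
    by_cases hjlow : (j : ℕ) < V.card
    · exact absurd (sig_lt_low V hjlow (by rw [Fin.lt_def]; omega)) (lt_asymm hj2)
    · by_cases hihigh : V.card ≤ (i : ℕ)
      · exact absurd (sig_lt_high V hihigh (by rw [Fin.lt_def]; omega)) (lt_asymm hj2)
      · exact Fin.ext (by simp only [Fin.val_mk]; omega)
  · rintro rfl
    refine ⟨⟨V.card, hvn⟩, by simp; omega, ?_⟩
    have hcond1 : ¬ ((⟨V.card, hvn⟩ : Fin n) : ℕ) < V.card := by simp
    have hcond2 : ((⟨V.card - 1, hlt⟩ : Fin n) : ℕ) < V.card := by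
      simp only [Fin.val_mk]; omega
    have h1 : sig V ⟨V.card, hvn⟩ = (Vᶜ).orderEmbOfFin rfl ⟨0, by omega⟩ := by
      rw [sig_apply, sigFun, dif_neg hcond1]
      congr 1
      exact Fin.ext (by simp)
    have h2 : sig V ⟨V.card - 1, hlt⟩ = V.orderEmbOfFin rfl ⟨V.card - 1, by omega⟩ := by
      rw [sig_apply, sigFun, dif_pos hcond2]
    rw [h1, h2]
    rw [Finset.orderEmbOfFin_zero rfl hc1, Finset.orderEmbOfFin_last rfl (by omega)]
    exact hminmax

lemma sig_eq_of (V : Finset (Fin n)) (σ : Equiv.Perm (Fin n))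
    (hmem : ∀ i : Fin n, σ i ∈ V ↔ (i : ℕ) < V.card)
    (hlow : ∀ i j : Fin n, i < j → (j : ℕ) < V.card → σ i < σ j)
    (hhigh : ∀ i j : Fin n, i < j → V.card ≤ (i : ℕ) → σ i < σ j) :
    σ = sig V := by
  have hvc := vC V
  have hvn : V.card ≤ n := by omega
  have hflow : (fun k : Fin V.card => σ ⟨k, lt_of_lt_of_le k.isLt hvn⟩)
      = V.orderEmbOfFin rfl := by
    apply Finset.orderEmbOfFin_unique rfl
    · intro x; exact (hmem _).2 (by simpa using x.isLt)
    · intro x y hxy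
      exact hlow _ _ (by rw [Fin.lt_def]; exact hxy) (by simpa using y.isLt)
  have hfhigh : (fun k : Fin (Vᶜ).card => σ ⟨V.card + k, by have := k.isLt; omega⟩)
      = (Vᶜ).orderEmbOfFin rfl := by
    apply Finset.orderEmbOfFin_unique rfl
    · intro x
      rw [Finset.mem_compl]
      intro hc
      have := (hmem _).1 hc
      simp at this
    · intro x y hxy
      exact hhigh _ _ (by rw [Fin.lt_def]; simpa using hxy) (by simp)
  ext i
  by_cases h : (i : ℕ) < V.card
  · have := congrFun hflow ⟨i, h⟩
    simp only [Fin.eta] at this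
    rw [this, sig_apply, sigFun, dif_pos h]
  · have hix : (i : ℕ) - V.card < (Vᶜ).card := by have := i.isLt; omega
    have := congrFun hfhigh ⟨(i : ℕ) - V.card, hix⟩
    have he : (⟨V.card + ((i : ℕ) - V.card), by have := i.isLt; omega⟩ : Fin n) = i :=
      Fin.ext (by simp only [Fin.val_mk]; omega)
    rw [he] at this
    rw [this, sig_apply, sigFun, dif_neg h]

lemma chain_lt (σ : Equiv.Perm (Fin n)) (a b : ℕ)
    (hstep : ∀ k k' : Fin n, (k' : ℕ) = (k : ℕ) + 1 → a ≤ (k : ℕ) → (k' : ℕ) ≤ b →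
      σ k < σ k') :
    ∀ i j : Fin n, a ≤ (i : ℕ) → (i : ℕ) < (j : ℕ) → (j : ℕ) ≤ b → σ i < σ j := by
  intro i j hai hij hjb
  obtain ⟨d, hd⟩ : ∃ d, (j : ℕ) = (i : ℕ) + 1 + d := ⟨(j : ℕ) - (i : ℕ) - 1, by omega⟩
  clear hij
  induction d generalizing j with
  | zero => exact hstep i j (by omega) hai (by omega)
  | succ d ih =>
    have hj' : (i : ℕ) + 1 + d < n := by have := j.isLt; omega
    have h1 : σ i < σ ⟨(i : ℕ) + 1 + d, hj'⟩ := by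
      apply ih ⟨(i : ℕ) + 1 + d, hj'⟩ <;> simp <;> omega
    refine lt_trans h1 (hstep ⟨(i : ℕ) + 1 + d, hj'⟩ j ?_ ?_ hjb) <;> simp <;> omega

end TVaux

namespace TVaux

open Finset

lemma init_eq {n : ℕ} (V : Finset (Fin n)) (h : IsInit V) :
    V = univ.filter (fun x : Fin n => (x : ℕ) < V.card) := by
  ext x
  simp only [Finset.mem_filter, Finset.mem_univ, true_and]
  constructor
  · intro hx
    have hsub : univ.filter (fun y : Fin n => (y : ℕ) < (x : ℕ) + 1) ⊆ V := by
      intro y hy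
      simp only [Finset.mem_filter, Finset.mem_univ, true_and] at hy
      exact h y x (by rw [Fin.le_def]; omega) hx
    have := Finset.card_le_card hsub
    rwa [card_filter_lt n (by have := x.isLt; omega)] at this
  · intro hx
    by_contra hxV
    have hsub : V ⊆ univ.filter (fun y : Fin n => (y : ℕ) < (x : ℕ)) := by
      intro y hy
      simp only [Finset.mem_filter, Finset.mem_univ, true_and]
      by_contra hc
      exact hxV (h x y (by rw [Fin.le_def]; omega) hy)
    have := Finset.card_le_card hsub
    rw [card_filter_lt n (le_of_lt x.isLt)] at this
    omega

lemma card_init (n : ℕ) :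
    ((univ : Finset (Finset (Fin n))).filter IsInit).card = n + 1 := by
  have h2 : ((univ : Finset (Finset (Fin n))).filter IsInit).card
      = (Finset.range (n + 1)).card :=
    Finset.card_bij' (fun V _ => V.card)
      (fun m _ => univ.filter (fun x : Fin n => (x : ℕ) < m))
      (fun V hV => by
        simp only [Finset.mem_range]
        have : V.card ≤ n := by
          have := Finset.card_le_card (Finset.subset_univ V)
          simpa using this
        omega)
      (fun m hm => by
        refine Finset.mem_filter.2 ⟨Finset.mem_univ _, ?_⟩
        intro x y hxy hy
        simp only [Finset.mem_filter, Finset.mem_univ, true_and] at hy ⊢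
        rw [Fin.le_def] at hxy
        omega)
      (fun V hV => (init_eq V (Finset.mem_filter.1 hV).2).symm)
      (fun m hm => by
        have hm' : m ≤ n := by have := Finset.mem_range.1 hm; omega
        simpa using card_filter_lt n hm')
  rw [h2, Finset.card_range]

lemma card_noninit (n : ℕ) :
    ((univ : Finset (Finset (Fin n))).filter (fun V => ¬ IsInit V)).card
      = 2 ^ n - (n + 1) := by
  have h1 := Finset.card_filter_add_card_filter_not
    (s := (univ : Finset (Finset (Fin n)))) (p := IsInit)
  rw [Finset.card_univ, Fintype.card_finset, Fintype.card_fin, card_init] at h1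
  omega

lemma card_rs2 (n : ℕ) :
    ((univ : Finset (Equiv.Perm (Fin n))).filter
      (fun π => ¬ π = 1 ∧ risingSequences π = 2)).card = 2 ^ n - (n + 1) := by
  rw [← card_noninit n]
  refine (Finset.card_bij (fun V _ => (sig V).symm) ?_ ?_ ?_).symm
  · -- maps to
    intro V hV
    have hV' : ¬ IsInit V := (Finset.mem_filter.1 hV).2
    refine Finset.mem_filter.2 ⟨Finset.mem_univ _, ?_, ?_⟩
    · intro hc
      exact hV' (init_of_sig_eq_one (by
        have := congrArg Equiv.symm hc
        exact (Equiv.symm_symm (sig V)).symm.trans this))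
    · obtain ⟨hlt, hD⟩ := Dset_sig hV'
      rw [risingSequences_eq, Equiv.symm_symm, hD, Finset.card_singleton]
  · -- injective
    intro V hV W hW hVW
    have hV' : ¬ IsInit V := (Finset.mem_filter.1 hV).2
    have hW' : ¬ IsInit W := (Finset.mem_filter.1 hW).2
    have hσ : sig V = sig W := by
      have := congrArg Equiv.symm hVW
      simpa using this
    obtain ⟨hltV, hDV⟩ := Dset_sig hV'
    obtain ⟨hltW, hDW⟩ := Dset_sig hW'
    rw [hσ, hDW] at hDV
    have hval : V.card - 1 = W.card - 1 := by
      have := Finset.singleton_injective hDV.symm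
      exact congrArg Fin.val this
    have hv1 : 1 ≤ V.card := by
      rcases Finset.eq_empty_or_nonempty V with h | h
      · exact absurd (by intro x y _ hy; rw [h] at hy; simp at hy) hV'
      · exact Finset.card_pos.2 h
    have hw1 : 1 ≤ W.card := by
      rcases Finset.eq_empty_or_nonempty W with h | h
      · exact absurd (by intro x y _ hy; rw [h] at hy; simp at hy) hW'
      · exact Finset.card_pos.2 h
    have hcard : V.card = W.card := by omega
    ext x
    rw [mem_iff_symm V x, mem_iff_symm W x, hσ, hcard]
  · -- surjective
    intro π hπ
    obtain ⟨-, hne, hrs⟩ : π ∈ univ ∧ ¬ π = 1 ∧ risingSequences π = 2 := by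
      simpa using Finset.mem_filter.1 hπ
    set σ := π.symm with hσdef
    have hD1 : (Dset σ).card = 1 := by
      rw [risingSequences_eq, ← hσdef] at hrs
      omega
    obtain ⟨i₀, hi₀⟩ := Finset.card_eq_one.1 hD1
    have hD : ∀ i : Fin n, (∃ j : Fin n, (j : ℕ) = (i : ℕ) + 1 ∧ σ j < σ i) ↔ i = i₀ := by
      intro i
      constructor
      · intro hi
        have : i ∈ Dset σ := Finset.mem_filter.2 ⟨Finset.mem_univ _, hi⟩
        rw [hi₀] at this
        exact Finset.mem_singleton.1 this
      · intro hi
        have h2 : i ∈ Dset σ := by rw [hi, hi₀]; exact Finset.mem_singleton_self _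
        exact (Finset.mem_filter.1 h2).2
    obtain ⟨j₀, hj₀, hdesc⟩ := (hD i₀).2 rfl
    have hj₀n : (i₀ : ℕ) + 1 < n := by have := j₀.isLt; omega
    have hstep : ∀ k k' : Fin n, (k' : ℕ) = (k : ℕ) + 1 → k ≠ i₀ → σ k < σ k' := by
      intro k k' hkk' hki
      rcases lt_trichotomy (σ k) (σ k') with h | h | h
      · exact h
      · exact absurd (σ.injective h) (by intro hc; rw [hc] at hkk'; omega)
      · exact absurd ((hD k).1 ⟨k', hkk', h⟩) hki
    set m := (i₀ : ℕ) + 1 with hm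
    set V : Finset (Fin n) := (univ.filter (fun k : Fin n => (k : ℕ) < m)).image σ with hVdef
    have hcard : V.card = m := by
      rw [hVdef, Finset.card_image_of_injective _ σ.injective,
        card_filter_lt n (le_of_lt hj₀n)]
    have hmem : ∀ i : Fin n, σ i ∈ V ↔ (i : ℕ) < V.card := by
      intro i
      rw [hcard, hVdef]
      simp only [Finset.mem_image, Finset.mem_filter, Finset.mem_univ, true_and]
      constructor
      · rintro ⟨k, hk, hki⟩
        rwa [← σ.injective hki]
      · intro hi
        exact ⟨i, hi, rfl⟩
    have hlow : ∀ i j : Fin n, i < j → (j : ℕ) < V.card → σ i < σ j := by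
      intro i j hij hjV
      rw [hcard] at hjV
      refine chain_lt σ 0 (i₀ : ℕ) ?_ i j (Nat.zero_le _) hij (by omega)
      intro k k' hkk' _ hk'b
      exact hstep k k' hkk' (by intro hc; rw [hc] at hkk'; omega)
    have hhigh : ∀ i j : Fin n, i < j → V.card ≤ (i : ℕ) → σ i < σ j := by
      intro i j hij hiV
      rw [hcard] at hiV
      refine chain_lt σ m (n : ℕ) ?_ i j hiV hij (by have := j.isLt; omega)
      intro k k' hkk' hak _
      exact hstep k k' hkk' (by intro hc; rw [hc] at hak; omega)
    have hσV : σ = sig V := sig_eq_of V σ hmem hlow hhigh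
    have hNI : ¬ IsInit V := by
      intro hInit
      have h1 : σ i₀ ∈ V := (hmem i₀).2 (by omega)
      have h2 : σ j₀ ∉ V := by
        rw [hmem j₀]
        omega
      exact h2 (hInit (σ j₀) (σ i₀) (le_of_lt hdesc) h1)
    refine ⟨V, Finset.mem_filter.2 ⟨Finset.mem_univ _, hNI⟩, ?_⟩
    show (sig V).symm = π
    rw [← hσV, hσdef, Equiv.symm_symm]

end TVaux


/-- The GSR riffle shuffle distribution on `S_n`: `(n+1)/2^n` on the identity,
`1/2^n` on each permutation with exactly two rising sequences, `0` otherwise. -/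
noncomputable def Qgsr (n : ℕ) (π : Equiv.Perm (Fin n)) : ℝ :=
  if π = 1 then ((n : ℝ) + 1) / 2 ^ n
  else if risingSequences π = 2 then 1 / 2 ^ n else 0

/-- The conditional distribution `Q_g`: `(n+2)/(2^n+1)` on the identity,
`1/(2^n+1)` on each permutation with two rising sequences, `0` otherwise. -/
noncomputable def Qg (n : ℕ) (π : Equiv.Perm (Fin n)) : ℝ :=
  if π = 1 then ((n : ℝ) + 2) / (2 ^ n + 1)
  else if risingSequences π = 2 then 1 / (2 ^ n + 1) else 0

/-- `TV(Q_f, Q_g) = (2^n − n − 1)/((2^n + 1)·2^n)`, and consequently for any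
reward function `R` with `0 ≤ R(π) ≤ n`, the expectations under `Q_f` and `Q_g`
differ by at most `n/2^{n-1}`. -/
theorem tv_Qgsr_Qg (n : ℕ) :
    (1 / 2) * (∑ π : Equiv.Perm (Fin n), |Qgsr n π - Qg n π|)
      = ((2 : ℝ) ^ n - (n : ℝ) - 1) / (((2 : ℝ) ^ n + 1) * 2 ^ n) ∧
    ∀ R : Equiv.Perm (Fin n) → ℝ, (∀ π, 0 ≤ R π ∧ R π ≤ (n : ℝ)) →
      |(∑ π : Equiv.Perm (Fin n), R π * Qgsr n π)
        - ∑ π : Equiv.Perm (Fin n), R π * Qg n π| ≤ (n : ℝ) / 2 ^ (n - 1) := by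
  classical
  have hE0 : (0 : ℝ) < 2 ^ n := by positivity
  have hE1 : (0 : ℝ) < (2 : ℝ) ^ n + 1 := by positivity
  have hnn : n + 1 ≤ 2 ^ n := Nat.lt_two_pow_self (n := n)
  have hnE : (n : ℝ) + 1 ≤ 2 ^ n := by
    calc (n : ℝ) + 1 = ((n + 1 : ℕ) : ℝ) := by push_cast; ring
    _ ≤ ((2 ^ n : ℕ) : ℝ) := Nat.cast_le.2 hnn
    _ = 2 ^ n := by push_cast; ring
  have hdiff : ∀ π : Equiv.Perm (Fin n), |Qgsr n π - Qg n π| =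
      if π = 1 then ((2 : ℝ) ^ n - n - 1) / (2 ^ n * (2 ^ n + 1))
      else if risingSequences π = 2 then 1 / ((2 : ℝ) ^ n * (2 ^ n + 1)) else 0 := by
    intro π
    by_cases h1 : π = 1
    · rw [if_pos h1]
      simp only [Qgsr, Qg, if_pos h1]
      have he : ((n : ℝ) + 1) / 2 ^ n - ((n : ℝ) + 2) / (2 ^ n + 1)
          = -(((2 : ℝ) ^ n - n - 1) / (2 ^ n * (2 ^ n + 1))) := by
        field_simp
        ring
      rw [he, abs_neg, abs_of_nonneg (div_nonneg (by linarith) (by positivity))]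
    · rw [if_neg h1]
      by_cases h2 : risingSequences π = 2
      · rw [if_pos h2]
        simp only [Qgsr, Qg, if_neg h1, if_pos h2]
        have he : (1 : ℝ) / 2 ^ n - 1 / (2 ^ n + 1)
            = 1 / ((2 : ℝ) ^ n * (2 ^ n + 1)) := by
          field_simp
          ring
        rw [he, abs_of_nonneg (by positivity)]
      · rw [if_neg h2]
        simp [Qgsr, Qg, h1, h2]
  have hcast : ((2 ^ n - (n + 1) : ℕ) : ℝ) = (2 : ℝ) ^ n - n - 1 := by
    rw [Nat.cast_sub hnn]
    push_cast
    ring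
  have hsum : (∑ π : Equiv.Perm (Fin n), |Qgsr n π - Qg n π|)
      = 2 * ((2 : ℝ) ^ n - n - 1) / (2 ^ n * (2 ^ n + 1)) := by
    rw [Finset.sum_congr rfl (fun π _ => hdiff π)]
    rw [← Finset.sum_erase_add _ _ (Finset.mem_univ (1 : Equiv.Perm (Fin n)))]
    rw [if_pos rfl]
    have hstep : ∀ π ∈ (Finset.univ : Finset (Equiv.Perm (Fin n))).erase 1,
        (if π = 1 then ((2 : ℝ) ^ n - n - 1) / (2 ^ n * (2 ^ n + 1))
          else if risingSequences π = 2 then 1 / ((2 : ℝ) ^ n * (2 ^ n + 1)) else 0)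
        = if risingSequences π = 2 then 1 / ((2 : ℝ) ^ n * (2 ^ n + 1)) else 0 :=
      fun π hπ => if_neg (Finset.ne_of_mem_erase hπ)
    rw [Finset.sum_congr rfl hstep, ← Finset.sum_filter]
    rw [Finset.sum_const, nsmul_eq_mul]
    have hsetseq : ((Finset.univ : Finset (Equiv.Perm (Fin n))).erase 1).filter
        (fun π => risingSequences π = 2)
        = (Finset.univ : Finset (Equiv.Perm (Fin n))).filter
            (fun π => ¬ π = 1 ∧ risingSequences π = 2) := by
      ext π
      simp only [Finset.mem_filter, Finset.mem_erase, Finset.mem_univ, true_and, and_true]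
      try tauto
    rw [hsetseq, TVaux.card_rs2 n, hcast]
    field_simp
    all_goals ring
  constructor
  · rw [hsum, mul_comm ((2 : ℝ) ^ n + 1) ((2 : ℝ) ^ n)]
    rw [mul_div_assoc']
    rw [div_eq_div_iff (by positivity) (by positivity)]
    all_goals ring
  · intro R hR
    have hb : ∀ π : Equiv.Perm (Fin n),
        |R π * Qgsr n π - R π * Qg n π| ≤ (n : ℝ) * |Qgsr n π - Qg n π| := by
      intro π
      rw [← mul_sub, abs_mul]
      apply mul_le_mul_of_nonneg_right _ (abs_nonneg _)
      rw [abs_of_nonneg (hR π).1]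
      exact (hR π).2
    have hmain : |(∑ π : Equiv.Perm (Fin n), R π * Qgsr n π)
        - ∑ π : Equiv.Perm (Fin n), R π * Qg n π|
        ≤ (n : ℝ) * (2 * ((2 : ℝ) ^ n - n - 1) / (2 ^ n * (2 ^ n + 1))) := by
      calc |(∑ π : Equiv.Perm (Fin n), R π * Qgsr n π)
          - ∑ π : Equiv.Perm (Fin n), R π * Qg n π|
          = |∑ π : Equiv.Perm (Fin n), (R π * Qgsr n π - R π * Qg n π)| := by
            rw [Finset.sum_sub_distrib]
        _ ≤ ∑ π : Equiv.Perm (Fin n), |R π * Qgsr n π - R π * Qg n π| :=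
            Finset.abs_sum_le_sum_abs _ _
        _ ≤ ∑ π : Equiv.Perm (Fin n), (n : ℝ) * |Qgsr n π - Qg n π| :=
            Finset.sum_le_sum (fun π _ => hb π)
        _ = (n : ℝ) * ∑ π : Equiv.Perm (Fin n), |Qgsr n π - Qg n π| := by
            rw [Finset.mul_sum]
        _ = (n : ℝ) * (2 * ((2 : ℝ) ^ n - n - 1) / (2 ^ n * (2 ^ n + 1))) := by
            rw [hsum]
    refine le_trans hmain ?_
    rcases Nat.eq_zero_or_pos n with h0 | hpos
    · subst h0
      norm_num
    · have hpow : (2 : ℝ) ^ (n - 1) * 2 = 2 ^ n := by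
        rw [← pow_succ, Nat.sub_add_cancel hpos]
      have hpow0 : (0 : ℝ) < 2 ^ (n - 1) := by positivity
      have hn0 : (0 : ℝ) ≤ (n : ℝ) := Nat.cast_nonneg n
      have key : 2 * ((2 : ℝ) ^ n - n - 1) / (2 ^ n * (2 ^ n + 1)) ≤ 1 / 2 ^ (n - 1) := by
        rw [div_le_div_iff₀ (by positivity) hpow0]
        nlinarith [hpow, hE0, hn0, mul_nonneg hn0 hE0.le, mul_pos hpow0 hE0]
      calc (n : ℝ) * (2 * ((2 : ℝ) ^ n - n - 1) / (2 ^ n * (2 ^ n + 1)))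
          ≤ (n : ℝ) * (1 / 2 ^ (n - 1)) := mul_le_mul_of_nonneg_left key hn0
        _ = (n : ℝ) / 2 ^ (n - 1) := by ring
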